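/- Let p be a prime with 2^(n-1) ≤ p < 2^n, and let x be an integer with 1 ≤ x < p. Run the Extended Euclidean Algorithm on (p, x) with termination index k. Then for every j with 1 ≤ j ≤ k−1: q_j·t_j ≤ t_{j+1} ≤ p, and consequently the bit lengths satisfy (⌊log₂ t_j⌋ + 1) + ⌊log₂ q_j⌋ ≤ n + 1. -/

import Mathlib

/-- Remainder sequence of the Extended Euclidean Algorithm on `(p, x)`:
`r 0 = p`, `r 1 = x`, and `r (i+1) = r (i-1) - ⌊r (i-1) / r i⌋ * r i` for `i ≥ 1`. -/
def eeaR (p x : ℕ) : ℕ → ℕ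
  | 0 => p
  | 1 => x
  | (i + 2) => eeaR p x i - (eeaR p x i / eeaR p x (i + 1)) * eeaR p x (i + 1)

/-- Quotient sequence `q i = ⌊r (i-1) / r i⌋` of the Extended Euclidean Algorithm. -/
def eeaQ (p x i : ℕ) : ℕ := eeaR p x (i - 1) / eeaR p x i

/-- Cofactor sequence of the Extended Euclidean Algorithm:
`t 0 = 0`, `t 1 = 1`, and `t (i+1) = t (i-1) + q i * t i` for `i ≥ 1`. -/
def eeaT (p x : ℕ) : ℕ → ℕ
  | 0 => 0
  | 1 => 1
  | (i + 2) => eeaT p x i + eeaQ p x (i + 1) * eeaT p x (i + 1)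

/-!
The cofactors satisfy the invariant `r i * t (i+1) + r (i+1) * t i = p`. As long as `r j > 0`
this gives `t (j+1) ≤ p`, while `q j * t j ≤ t (j+1)` is immediate from the recursion for `t`.
Since `x ≤ p` and the remainders before `r k = 0` are positive, all these `q j` and `t j` are
positive, hence `2 ^ (log₂ q j + log₂ t j) ≤ q j * t j ≤ p < 2 ^ n`.
-/

theorem Nat.log_add_log_le_log_mul {b m n : ℕ} (hb : 1 < b) (hm : m ≠ 0) (hn : n ≠ 0) :
    Nat.log b m + Nat.log b n ≤ Nat.log b (m * n) :=
  Nat.le_log_of_pow_le hb <| pow_add b _ _ ▸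
    Nat.mul_le_mul (Nat.pow_log_le_self b hm) (Nat.pow_log_le_self b hn)

section EEA

variable {p x : ℕ}

theorem eeaR_add_two (i : ℕ) : eeaR p x (i + 2) = eeaR p x i % eeaR p x (i + 1) := by
  rw [Nat.mod_eq_sub_mul_div, Nat.mul_comm]
  rfl

theorem eeaT_add_two (i : ℕ) :
    eeaT p x (i + 2) = eeaT p x i + eeaQ p x (i + 1) * eeaT p x (i + 1) :=
  rfl

theorem eeaR_eq_eeaQ_mul_add (i : ℕ) :
    eeaR p x i = eeaQ p x (i + 1) * eeaR p x (i + 1) + eeaR p x (i + 2) := by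
  rw [eeaR_add_two]
  exact (Nat.div_add_mod' _ _).symm

theorem eeaR_mul_eeaT_add_eeaR_mul_eeaT (i : ℕ) :
    eeaR p x i * eeaT p x (i + 1) + eeaR p x (i + 1) * eeaT p x i = p := by
  induction i with
  | zero => simp [eeaR, eeaT]
  | succ i ih =>
    rw [eeaR_eq_eeaQ_mul_add] at ih
    rw [eeaT_add_two]
    linear_combination ih

theorem eeaT_succ_le (j : ℕ) (hr : 0 < eeaR p x j) : eeaT p x (j + 1) ≤ p :=
  calc eeaT p x (j + 1) ≤ eeaR p x j * eeaT p x (j + 1) := Nat.le_mul_of_pos_left _ hr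
    _ ≤ p := (Nat.le_add_right _ _).trans_eq (eeaR_mul_eeaT_add_eeaR_mul_eeaT j)

theorem eeaQ_mul_eeaT_le_eeaT_succ {j : ℕ} (hj : 1 ≤ j) :
    eeaQ p x j * eeaT p x j ≤ eeaT p x (j + 1) := by
  obtain ⟨i, rfl⟩ := Nat.exists_eq_add_of_le' hj
  rw [eeaT_add_two]
  exact Nat.le_add_left _ _

theorem eeaR_succ_le (hxp : x ≤ p) {i : ℕ} (hr : 0 < eeaR p x i) :
    eeaR p x (i + 1) ≤ eeaR p x i := by
  cases i with
  | zero => exact hxp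
  | succ i => exact eeaR_add_two i ▸ (Nat.mod_lt _ hr).le

theorem eeaQ_succ_pos (hxp : x ≤ p) {i : ℕ} (hr : 0 < eeaR p x i) (hr' : 0 < eeaR p x (i + 1)) :
    0 < eeaQ p x (i + 1) :=
  Nat.div_pos (eeaR_succ_le hxp hr) hr'

theorem eeaT_succ_pos (hxp : x ≤ p) {j : ℕ} (hr : ∀ i ≤ j, 0 < eeaR p x i) :
    0 < eeaT p x (j + 1) := by
  induction j with
  | zero => exact Nat.one_pos
  | succ j ih =>
    rw [eeaT_add_two]
    have hq := eeaQ_succ_pos hxp (hr j (by omega)) (hr (j + 1) le_rfl)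
    have ht := ih fun i hi => hr i (by omega)
    exact Nat.add_pos_right _ (Nat.mul_pos hq ht)

end EEA

theorem stmt_11_general (n p x : ℕ) (hpub : p < 2 ^ n)
    (hxp : x < p)
    (k : ℕ) (hkmin : ∀ m < k, eeaR p x m ≠ 0) :
    ∀ j, 1 ≤ j → j ≤ k - 1 →
      eeaQ p x j * eeaT p x j ≤ eeaT p x (j + 1) ∧ eeaT p x (j + 1) ≤ p ∧
        (Nat.log 2 (eeaT p x j) + 1) + Nat.log 2 (eeaQ p x j) ≤ n + 1 := by
  intro j hj hjk
  have hr : ∀ i ≤ j, 0 < eeaR p x i := fun i hi => Nat.pos_of_ne_zero (hkmin i (by omega))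
  have hqt := eeaQ_mul_eeaT_le_eeaT_succ (p := p) (x := x) hj
  have htp := eeaT_succ_le j (hr j le_rfl)
  refine ⟨hqt, htp, ?_⟩
  obtain ⟨i, rfl⟩ := Nat.exists_eq_add_of_le' hj
  have hq := eeaQ_succ_pos hxp.le (hr i (by omega)) (hr (i + 1) le_rfl)
  have ht := eeaT_succ_pos (j := i) hxp.le fun m hm => hr m (by omega)
  have hlog_add := Nat.log_add_log_le_log_mul one_lt_two hq.ne' ht.ne'
  have hlog_lt := Nat.log_lt_of_lt_pow (Nat.mul_pos hq ht).ne' ((hqt.trans htp).trans_lt hpub)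
  omega

/-- For a prime `p` with `2^(n-1) ≤ p < 2^n` and `1 ≤ x < p`, with
termination index `k`: for every `1 ≤ j ≤ k−1`, `q_j·t_j ≤ t_{j+1} ≤ p`, and the bit
lengths satisfy `(⌊log₂ t_j⌋ + 1) + ⌊log₂ q_j⌋ ≤ n + 1`. -/
theorem stmt_11 (n p x : ℕ) (hp : p.Prime)
    (hplb : 2 ^ (n - 1) ≤ p) (hpub : p < 2 ^ n)
    (hx : 1 ≤ x) (hxp : x < p)
    (k : ℕ) (hk : eeaR p x k = 0) (hkmin : ∀ m < k, eeaR p x m ≠ 0) :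
    ∀ j, 1 ≤ j → j ≤ k - 1 →
      eeaQ p x j * eeaT p x j ≤ eeaT p x (j + 1) ∧ eeaT p x (j + 1) ≤ p ∧
        (Nat.log 2 (eeaT p x j) + 1) + Nat.log 2 (eeaQ p x j) ≤ n + 1 :=
  stmt_11_general n p x hpub hxp k hkmin
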